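/- arXiv:2401.01252 — 2 statements merged into one kernel-verified Lean document; each statement's English description precedes it below -/
import Mathlib

section
/- Let F be a vector bundle on a complex elliptic curve whose rank and degree are coprime. If F is indecomposable, then F is stable. -/
/-- An indecomposable vector bundle `F` on a complex elliptic curve whose
rank and degree are coprime is stable.  The hypothesis `hsemi` records the Atiyah/Tu fact
that indecomposable bundles on an elliptic curve are semistable; the conclusion is
stability: every proper nonzero subbundle has strictly smaller slope. -/
theorem stmt_5
    (Bundle : Type*) (rk : Bundle → ℕ) (deg : Bundle → ℤ)
    (Sub : Bundle → Bundle → Prop)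
    (Indecomposable : Bundle → Prop)
    -- Atiyah/Tu: indecomposable bundles on an elliptic curve are semistable
    (hsemi : ∀ G, Indecomposable G → ∀ G', Sub G' G → 0 < rk G' → rk G' < rk G →
      (deg G' : ℚ) / (rk G' : ℚ) ≤ (deg G : ℚ) / (rk G : ℚ))
    (F : Bundle) (hrkF : 0 < rk F)
    (hcop : Int.gcd (deg F) (rk F : ℤ) = 1)
    (hind : Indecomposable F) :
    ∀ F', Sub F' F → 0 < rk F' → rk F' < rk F →
      (deg F' : ℚ) / (rk F' : ℚ) < (deg F : ℚ) / (rk F : ℚ) := by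
  intro F' hsub hpos hlt
  rcases lt_or_eq_of_le (hsemi F hind F' hsub hpos hlt) with h | h
  · exact h
  · exfalso
    have hr0 : (rk F' : ℚ) ≠ 0 := Nat.cast_ne_zero.mpr hpos.ne'
    have hR0 : (rk F : ℚ) ≠ 0 := Nat.cast_ne_zero.mpr hrkF.ne'
    have hq : (deg F' : ℚ) * (rk F : ℚ) = (deg F : ℚ) * (rk F' : ℚ) := by
      field_simp at h
      linarith
    have hz : deg F' * (rk F : ℤ) = deg F * (rk F' : ℤ) := by
      exact_mod_cast hq
    have hcop' : IsCoprime (rk F : ℤ) (deg F) := by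
      rw [Int.isCoprime_iff_gcd_eq_one, Int.gcd_comm]
      exact hcop
    have hdvd : (rk F : ℤ) ∣ (rk F' : ℤ) := by
      have : (rk F : ℤ) ∣ deg F * (rk F' : ℤ) := ⟨deg F', by linarith⟩
      exact hcop'.dvd_of_dvd_mul_left this
    have : rk F ∣ rk F' := Int.ofNat_dvd.mp hdvd
    exact absurd (Nat.le_of_dvd hpos this) (not_le.mpr hlt)
end

section
/- Let E be a vector bundle of positive degree on a complex elliptic curve admitting a stable section Φ: O → E (meaning Φ is nonzero, non-split, and E/Φ(O) is stable). Then every indecomposable direct summand of E has positive degree. -/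
/-- Lemma 2.1 of the paper: If a vector bundle `E` of positive degree on
a complex elliptic curve admits a stable section, then every indecomposable direct
summand of `E` has positive degree.  The stable section is recorded through the
equivalent slope condition on proper nonzero subbundles (Definition 1.1 of the paper);
complementary summands of direct sum decompositions are subbundles. -/
theorem stmt_10
    (Bundle : Type*) (rk : Bundle → ℕ) (deg : Bundle → ℤ)
    (Sub : Bundle → Bundle → Prop) (Iso : Bundle → Bundle → Prop)
    (dsum : Bundle → Bundle → Bundle)
    (Indecomposable : Bundle → Prop)
    (hindec_rk : ∀ G, Indecomposable G → 0 < rk G)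
    (hzero : ∀ G, rk G = 0 → deg G = 0)
    (E : Bundle) (hdegE : 0 < deg E) (hrkE : 2 ≤ rk E)
    -- E admits a stable section: every proper nonzero subbundle E₁ ≤ E satisfies
    -- μ(E₁) < deg(E)/(rk(E) − 1)
    (hstable : ∀ E₁, Sub E₁ E → 0 < rk E₁ → rk E₁ < rk E →
      (deg E₁ : ℚ) / (rk E₁ : ℚ) < (deg E : ℚ) / ((rk E : ℚ) - 1))
    -- a direct summand's complement is (isomorphic to) a subbundle, and rank and
    -- degree are additive over direct sums
    (hcompl : ∀ E' E'', Iso E (dsum E' E'') →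
      (∃ S, Sub S E ∧ rk S = rk E'' ∧ deg S = deg E'') ∧
        rk E = rk E' + rk E'' ∧ deg E = deg E' + deg E'')
    (E' : Bundle) (hE' : Indecomposable E')
    (hsummand : ∃ E'', Iso E (dsum E' E'')) :
    0 < deg E' := by
  obtain ⟨E'', hiso⟩ := hsummand
  obtain ⟨⟨S, hSsub, hSrk, hSdeg⟩, hrkadd, hdegadd⟩ := hcompl E' E'' hiso
  by_contra hle
  push_neg at hle
  have hdegE'' : deg E ≤ deg E'' := by omega
  have hrkE' : 0 < rk E' := hindec_rk E' hE'
  have hrkS : 0 < rk S := by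
    rcases Nat.eq_zero_or_pos (rk S) with h0 | h
    · have := hzero S h0; omega
    · exact h
  have hrkSlt : rk S < rk E := by omega
  have hst := hstable S hSsub hrkS hrkSlt
  rw [hSdeg] at hst
  have h1 : (1 : ℚ) ≤ (rk E : ℚ) - 1 := by
    have : (2 : ℚ) ≤ (rk E : ℚ) := by exact_mod_cast hrkE
    linarith
  have hpos : (0 : ℚ) < (rk E : ℚ) - 1 := by linarith
  have hrkSQ : (0 : ℚ) < (rk S : ℚ) := by exact_mod_cast hrkS
  have hrkSle : (rk S : ℚ) ≤ (rk E : ℚ) - 1 := by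
    have : rk S + 1 ≤ rk E := hrkSlt
    have : ((rk S : ℚ)) + 1 ≤ (rk E : ℚ) := by exact_mod_cast this
    linarith
  -- from hst: deg E'' * (rk E - 1) < deg E * rk S
  rw [div_lt_div_iff₀ hrkSQ hpos] at hst
  have hdE : (0 : ℚ) < (deg E : ℚ) := by exact_mod_cast hdegE
  have hdE'' : (deg E : ℚ) ≤ (deg E'' : ℚ) := by exact_mod_cast hdegE''
  nlinarith [mul_le_mul_of_nonneg_left hrkSle (le_of_lt hdE)]
end
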